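/- arXiv:2509.04187 — 2 statements merged into one kernel-verified Lean document; each statement's English description precedes it below -/
import Mathlib

section
/- Let k be a positive even integer and let f be a cusp form of weight k for the full modular group SL₂(ℤ). Then for every complex number s, the integrals ∫_0^∞ f(iy) · y^{s+(k−1)/2−1} dy and ∫_1^∞ f(iy) · ((−1)^{k/2} y^{(k−1)/2−s} + y^{s+(k−3)/2}) dy both converge and are equal. -/
open Complex UpperHalfPlane

/-- The restriction of a function on the upper half-plane to the positive imaginary
axis: `atI f y = f(iy)` for `y > 0` (junk value `0` otherwise). -/
noncomputable def atI (f : ℍ → ℂ) (y : ℝ) : ℂ :=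
  if h : 0 < y then f ⟨Complex.I * y, by simpa using h⟩ else 0

/-!
The substitution `y ↦ 1/y` carries `(0, 1)` onto `(1, ∞)`, and the modular relation
`f(i/y) = i^k y^k f(iy)` coming from `S = (0 -1; 1 0)` turns `∫_0^1 f(iy) y^{s'-1} dy` into
`(-1)^{k/2} ∫_1^∞ f(iy) y^{k-s'-1} dy`. Every integral over `(1, ∞)` converges because `f(iy)`
decays exponentially as `y → ∞`.
-/

open MeasureTheory Set Filter Asymptotics
open scoped MatrixGroups

section InvChangeOfVariables

variable {E : Type*} [NormedAddCommGroup E] [NormedSpace ℝ E]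

lemma image_inv_Ioi_one : Inv.inv '' Ioi (1 : ℝ) = Ioo 0 1 := by
  rw [image_inv_eq_inv, inv_Ioi₀ one_pos, inv_one]

lemma hasDerivWithinAt_inv_Ioi_one {x : ℝ} (hx : x ∈ Ioi 1) :
    HasDerivWithinAt Inv.inv (-(x ^ 2)⁻¹) (Ioi 1) x :=
  (hasDerivAt_inv (zero_lt_one.trans hx).ne').hasDerivWithinAt

lemma abs_neg_inv_sq (x : ℝ) : |-(x ^ 2)⁻¹| = (x ^ 2)⁻¹ := by
  rw [abs_neg, abs_of_nonneg (by positivity)]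

theorem integrableOn_Ioo_zero_one_iff_comp_inv {g : ℝ → E} :
    IntegrableOn g (Ioo 0 1) ↔ IntegrableOn (fun x ↦ (x ^ 2)⁻¹ • g x⁻¹) (Ioi 1) := by
  simp only [← image_inv_Ioi_one, integrableOn_image_iff_integrableOn_abs_deriv_smul
    measurableSet_Ioi (fun _ ↦ hasDerivWithinAt_inv_Ioi_one) inv_injective.injOn, abs_neg_inv_sq]

theorem setIntegral_Ioo_zero_one_eq_comp_inv (g : ℝ → E) :
    ∫ x in Ioo 0 1, g x = ∫ x in Ioi 1, (x ^ 2)⁻¹ • g x⁻¹ := by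
  simp only [← image_inv_Ioi_one, integral_image_eq_integral_abs_deriv_smul
    measurableSet_Ioi (fun _ ↦ hasDerivWithinAt_inv_Ioi_one) inv_injective.injOn, abs_neg_inv_sq]

end InvChangeOfVariables

section InversionSymmetric

variable {φ : ℝ → ℂ} {ε w : ℂ}

lemma inv_sq_smul_comp_inv_mul_cpow (hφ : ∀ y : ℝ, 0 < y → φ y⁻¹ = ε * (y : ℂ) ^ w * φ y)
    (s : ℂ) {x : ℝ} (hx : 0 < x) :
    (x ^ 2)⁻¹ • (φ x⁻¹ * ((x⁻¹ : ℝ) : ℂ) ^ (s - 1)) = ε * (φ x * (x : ℂ) ^ (w - s - 1)) := by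
  have hx' : (x : ℂ) ≠ 0 := ofReal_ne_zero.mpr hx.ne'
  have hinv : ((x⁻¹ : ℝ) : ℂ) ^ (s - 1) = (x : ℂ) ^ (1 - s) := by
    rw [ofReal_inv, inv_cpow _ _ (by simp [arg_ofReal_of_nonneg hx.le, Real.pi_ne_zero.symm]),
      ← cpow_neg, neg_sub]
  have hsq : (((x ^ 2)⁻¹ : ℝ) : ℂ) = (x : ℂ) ^ (-2 : ℂ) := by
    rw [cpow_neg, show (2 : ℂ) = (2 : ℕ) by norm_num, cpow_natCast]; push_cast; rfl
  rw [real_smul, hφ x hx, hinv, hsq, show w - s - 1 = -2 + (w + (1 - s)) by ring,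
    cpow_add _ _ hx', cpow_add _ _ hx']
  ring

variable (hφ : ∀ y : ℝ, 0 < y → φ y⁻¹ = ε * (y : ℂ) ^ w * φ y)
  (hint : ∀ c : ℂ, IntegrableOn (fun y : ℝ ↦ φ y * (y : ℂ) ^ c) (Ioi 1))
include hφ hint

theorem integrableOn_Ioi_zero_mul_cpow_of_comp_inv (s : ℂ) :
    IntegrableOn (fun y : ℝ ↦ φ y * (y : ℂ) ^ (s - 1)) (Ioi 0) := by
  have h01 : IntegrableOn (fun y : ℝ ↦ φ y * (y : ℂ) ^ (s - 1)) (Ioo 0 1) := by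
    refine integrableOn_Ioo_zero_one_iff_comp_inv.mpr ?_
    have hε : IntegrableOn (fun x : ℝ ↦ ε * (φ x * (x : ℂ) ^ (w - s - 1))) (Ioi 1) :=
      (hint _).const_mul ε
    exact hε.congr_fun (fun x hx ↦ (inv_sq_smul_comp_inv_mul_cpow hφ s (zero_lt_one.trans hx)).symm)
      measurableSet_Ioi
  rw [← Ioo_union_Ici_eq_Ioi zero_lt_one]
  exact h01.union ((integrableOn_Ici_iff_integrableOn_Ioi).mpr (hint _))

theorem integral_Ioi_zero_mul_cpow_of_comp_inv (s : ℂ) :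
    ∫ y in Ioi 0, φ y * (y : ℂ) ^ (s - 1) =
      ∫ y in Ioi 1, φ y * (ε * (y : ℂ) ^ (w - s - 1) + (y : ℂ) ^ (s - 1)) := by
  have h01 : ∫ y in Ioo 0 1, φ y * (y : ℂ) ^ (s - 1) =
      ε * ∫ y in Ioi 1, φ y * (y : ℂ) ^ (w - s - 1) := by
    rw [setIntegral_Ioo_zero_one_eq_comp_inv, ← integral_const_mul]
    exact setIntegral_congr_fun measurableSet_Ioi
      fun x hx ↦ inv_sq_smul_comp_inv_mul_cpow hφ s (zero_lt_one.trans hx)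
  have hint0 := integrableOn_Ioi_zero_mul_cpow_of_comp_inv hφ hint s
  rw [← Ioo_union_Ici_eq_Ioi zero_lt_one] at hint0 ⊢
  rw [setIntegral_union ((Iio_disjoint_Ici le_rfl).mono_left Ioo_subset_Iio_self)
      measurableSet_Ici (hint0.mono_set subset_union_left) (hint0.mono_set subset_union_right),
    h01, integral_Ici_eq_integral_Ioi, ← integral_const_mul, ← integral_add]
  · simp only [mul_add, mul_left_comm ε]
  · exact (hint _).const_mul ε
  · exact hint _

theorem mellin_unfolding_of_comp_inv (s : ℂ) :
    IntegrableOn (fun y : ℝ ↦ φ y * (y : ℂ) ^ (s - 1)) (Ioi 0) ∧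
    IntegrableOn (fun y : ℝ ↦ φ y * (ε * (y : ℂ) ^ (w - s - 1) + (y : ℂ) ^ (s - 1))) (Ioi 1) ∧
    ∫ y in Ioi 0, φ y * (y : ℂ) ^ (s - 1) =
      ∫ y in Ioi 1, φ y * (ε * (y : ℂ) ^ (w - s - 1) + (y : ℂ) ^ (s - 1)) := by
  refine ⟨integrableOn_Ioi_zero_mul_cpow_of_comp_inv hφ hint s, ?_,
    integral_Ioi_zero_mul_cpow_of_comp_inv hφ hint s⟩
  have hsum : IntegrableOn
      (fun y : ℝ ↦ ε * (φ y * (y : ℂ) ^ (w - s - 1)) + φ y * (y : ℂ) ^ (s - 1)) (Ioi 1) :=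
    ((hint _).const_mul ε).add (hint _)
  simpa only [mul_add, mul_left_comm ε] using hsum

end InversionSymmetric

theorem integrableOn_Ioi_mul_cpow_of_isBigO_exp_neg {g : ℝ → ℂ} {a b : ℝ} (ha : 0 < a)
    (hb : 0 < b) (hg : ContinuousOn g (Ici a)) (ho : g =O[atTop] fun y ↦ Real.exp (-b * y))
    (c : ℂ) : IntegrableOn (fun y : ℝ ↦ g y * (y : ℂ) ^ c) (Ioi a) := by
  have hcont : ContinuousOn (fun y : ℝ ↦ g y * (y : ℂ) ^ c) (Ici a) := hg.mul fun y hy ↦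
    (continuousAt_ofReal_cpow_const y c (Or.inr (ha.trans_le hy).ne')).continuousWithinAt
  have hcpow : (fun y : ℝ ↦ (y : ℂ) ^ c) =O[atTop] fun y ↦ Real.exp (b / 2 * y) := by
    refine (IsBigO.of_bound' ?_).trans
      (isLittleO_rpow_exp_pos_mul_atTop c.re (half_pos hb)).isBigO
    filter_upwards [eventually_gt_atTop 0] with y hy
    rw [norm_cpow_eq_rpow_re_of_pos hy, Real.norm_of_nonneg (by positivity)]
  have hdecay : (fun y : ℝ ↦ g y * (y : ℂ) ^ c) =O[atTop] fun y ↦ Real.exp (-(b / 2) * y) :=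
    (ho.mul hcpow).congr_right fun y ↦ by rw [← Real.exp_add]; ring_nf
  exact (integrableOn_Ici_iff_integrableOn_Ioi).mp <|
    (hcont.locallyIntegrableOn measurableSet_Ici).integrableOn_of_isBigO_atTop hdecay
      ⟨Ioi 0, Ioi_mem_atTop 0, exp_neg_integrableOn_Ioi 0 (half_pos hb)⟩

lemma atI_of_pos (f : ℍ → ℂ) {y : ℝ} (hy : 0 < y) :
    atI f y = f (ofComplex (Complex.I * y)) := by
  rw [atI, dif_pos hy, ofComplex_apply_of_im_pos (by simpa using hy)]

lemma continuousOn_atI {f : ℍ → ℂ} (hf : Continuous f) : ContinuousOn (atI f) (Ioi 0) := by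
  refine ContinuousOn.congr ?_ fun y hy ↦ atI_of_pos f hy
  fun_prop

lemma tendsto_ofComplex_I_mul_atTop_atImInfty :
    Tendsto (fun t : ℝ ↦ ofComplex (Complex.I * t)) atTop atImInfty := by
  rw [atImInfty, tendsto_comap_iff]
  refine tendsto_id.congr' ?_
  filter_upwards [eventually_gt_atTop 0] with t ht
  simp [ofComplex_apply_of_im_pos, ht, ← coe_im]

lemma isBigO_atI_of_isBigO_atImInfty {f : ℍ → ℂ} {c : ℝ}
    (hf : f =O[atImInfty] fun τ ↦ Real.exp (-c * τ.im)) :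
    atI f =O[atTop] fun y ↦ Real.exp (-c * y) := by
  refine (hf.comp_tendsto tendsto_ofComplex_I_mul_atTop_atImInfty).congr' ?_ ?_ <;>
    filter_upwards [eventually_gt_atTop 0] with y hy
  · exact (atI_of_pos f hy).symm
  · simp [ofComplex_apply_of_im_pos, hy, ← coe_im]

theorem CuspFormClass.integrableOn_atI_mul_cpow {Γ : Subgroup (GL (Fin 2) ℝ)} [Γ.IsArithmetic]
    {k : ℤ} {F : Type*} [FunLike F ℍ ℂ] [CuspFormClass F Γ k] (f : F) (c : ℂ) :
    IntegrableOn (fun y : ℝ ↦ atI f y * (y : ℂ) ^ c) (Ioi 1) := by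
  obtain ⟨b, hb, hdecay⟩ := CuspFormClass.exp_decay_atImInfty' f
  exact integrableOn_Ioi_mul_cpow_of_isBigO_exp_neg one_pos hb
    ((continuousOn_atI (ModularFormClass.continuous f)).mono (Ici_subset_Ioi.mpr one_pos))
    (isBigO_atI_of_isBigO_atImInfty hdecay) c

lemma SlashInvariantFormClass.atI_inv {k : ℤ} {F : Type*} [FunLike F ℍ ℂ]
    [SlashInvariantFormClass F (⊤ : Subgroup SL(2, ℤ)) k] (f : F) {y : ℝ} (hy : 0 < y) :
    atI f y⁻¹ = Complex.I ^ k * (y : ℂ) ^ k * atI f y := by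
  have hS := SlashInvariantForm.slash_action_eqn_SL'' f (Subgroup.mem_top ModularGroup.S)
    ⟨Complex.I * y, by simpa using hy⟩
  have hSz : ModularGroup.S • (⟨Complex.I * y, by simpa using hy⟩ : ℍ) =
      ⟨Complex.I * (y⁻¹ : ℝ), by simpa using hy⟩ := by
    rw [modular_S_smul]
    ext
    simp [mul_comm]
  rw [hSz, ModularGroup.denom_S] at hS
  rw [atI, atI, dif_pos (inv_pos.mpr hy), dif_pos hy, hS, ← mul_zpow]

lemma Complex.I_pow_of_even {n : ℕ} (hn : Even n) : Complex.I ^ n = (-1) ^ (n / 2) := by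
  obtain ⟨r, rfl⟩ := hn
  rw [← two_mul, pow_mul, I_sq, Nat.mul_div_cancel_left r two_pos]

open MeasureTheory Set in
theorem cuspForm_mellin_unfolding_general (k : ℕ) (hke : Even k)
    (f : CuspForm (⊤ : Subgroup (Matrix.SpecialLinearGroup (Fin 2) ℤ)) (k : ℤ)) (s : ℂ) :
    IntegrableOn (fun y : ℝ => atI ⇑f y * (y : ℂ) ^ (s + ((k : ℂ) - 1) / 2 - 1))
      (Ioi (0 : ℝ)) ∧
    IntegrableOn (fun y : ℝ => atI ⇑f y *
        ((-1 : ℂ) ^ (k / 2) * (y : ℂ) ^ (((k : ℂ) - 1) / 2 - s) +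
          (y : ℂ) ^ (s + ((k : ℂ) - 3) / 2))) (Ioi (1 : ℝ)) ∧
    (∫ y in Ioi (0 : ℝ), atI ⇑f y * (y : ℂ) ^ (s + ((k : ℂ) - 1) / 2 - 1)) =
      ∫ y in Ioi (1 : ℝ), atI ⇑f y *
        ((-1 : ℂ) ^ (k / 2) * (y : ℂ) ^ (((k : ℂ) - 1) / 2 - s) +
          (y : ℂ) ^ (s + ((k : ℂ) - 3) / 2)) := by
  have hinv : ∀ y : ℝ, 0 < y → atI f y⁻¹ = (-1) ^ (k / 2) * (y : ℂ) ^ (k : ℂ) * atI f y :=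
    fun y hy ↦ by
      rw [SlashInvariantFormClass.atI_inv f hy, zpow_natCast, zpow_natCast,
        Complex.I_pow_of_even hke, cpow_natCast]
  have h := mellin_unfolding_of_comp_inv hinv (CuspFormClass.integrableOn_atI_mul_cpow f)
    (s + ((k : ℂ) - 1) / 2)
  rw [show (k : ℂ) - (s + ((k : ℂ) - 1) / 2) - 1 = ((k : ℂ) - 1) / 2 - s by ring] at h
  rwa [show s + ((k : ℂ) - 3) / 2 = s + ((k : ℂ) - 1) / 2 - 1 by ring]

open MeasureTheory Set in
/-- For a cusp form `f` of positive even weight `k` for `SL₂(ℤ)` and any `s ∈ ℂ`, the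
integrals `∫_0^∞ f(iy) y^{s+(k-1)/2-1} dy` and
`∫_1^∞ f(iy) ((-1)^{k/2} y^{(k-1)/2-s} + y^{s+(k-3)/2}) dy` both converge and are equal. -/
theorem cuspForm_mellin_unfolding (k : ℕ) (hk : 0 < k) (hke : Even k)
    (f : CuspForm (⊤ : Subgroup (Matrix.SpecialLinearGroup (Fin 2) ℤ)) (k : ℤ)) (s : ℂ) :
    IntegrableOn (fun y : ℝ => atI ⇑f y * (y : ℂ) ^ (s + ((k : ℂ) - 1) / 2 - 1))
      (Ioi (0 : ℝ)) ∧
    IntegrableOn (fun y : ℝ => atI ⇑f y *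
        ((-1 : ℂ) ^ (k / 2) * (y : ℂ) ^ (((k : ℂ) - 1) / 2 - s) +
          (y : ℂ) ^ (s + ((k : ℂ) - 3) / 2))) (Ioi (1 : ℝ)) ∧
    (∫ y in Ioi (0 : ℝ), atI ⇑f y * (y : ℂ) ^ (s + ((k : ℂ) - 1) / 2 - 1)) =
      ∫ y in Ioi (1 : ℝ), atI ⇑f y *
        ((-1 : ℂ) ^ (k / 2) * (y : ℂ) ^ (((k : ℂ) - 1) / 2 - s) +
          (y : ℂ) ^ (s + ((k : ℂ) - 3) / 2)) :=
  cuspForm_mellin_unfolding_general k hke f s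
end

section
/- Fix k ∈ {12, 16, 20} and define the completed L-function Λ_k(s) = ∫_1^∞ Δ_k(iy) · ((−1)^{k/2} y^{(k−1)/2−s} + y^{s+(k−3)/2}) dy. Then Λ_k(1/2) is a (strictly) positive real number; in particular Λ_k does not vanish at the central point s = 1/2. -/
/-!
On the imaginary axis `q = e^{-2πy}` is a real number in `(0, 1)`, so `Δ(iy) = q ∏ (1 - qⁿ)²⁴` is
a positive real, and so is `E_{2k}(iy) = 1 - (4k / B_{2k}) ∑ σ_{2k-1}(n) qⁿ` for even `k`, because
then `B_{2k} < 0` (the sign of `ζ(2k) > 0`). Since `k/2` is even, at `s = 1/2` the two terms of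
the kernel coincide and `Λ_k(1/2) = 2 ∫_1^∞ Δ_k(iy) y^{k/2-1} dy` integrates a positive function,
which is integrable because `Δ_k(iy) = O(e^{-2πy})`.
-/

open Complex

/-- `Q z = e^{2πiz}`. -/
noncomputable def Q (z : ℂ) : ℂ := Complex.exp (2 * Real.pi * Complex.I * z)

/-- Ramanujan's Delta function, `Δ(z) = q ∏_{n=1}^∞ (1 - q^n)^24` with `q = e^{2πiz}`. -/
noncomputable def Delta (z : ℂ) : ℂ := Q z * ∏' n : ℕ, (1 - Q z ^ (n + 1)) ^ 24

/-- The normalized Eisenstein series of weight `2k` for `SL₂(ℤ)`: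
`E_{2k}(z) = 1 - (4k / B_{2k}) ∑_{n=1}^∞ σ_{2k-1}(n) q^n` with `q = e^{2πiz}`. -/
noncomputable def Eis (k : ℕ) (z : ℂ) : ℂ :=
  1 - (4 * k / ((bernoulli (2 * k) : ℚ) : ℂ)) *
    ∑' n : ℕ, ((ArithmeticFunction.sigma (2 * k - 1)) (n + 1) : ℂ) * Q z ^ (n + 1)

/-- For `k ∈ {12, 16, 18, 20, 22, 26}`, `Δ_k(z) = Δ(z) · E_{k-12}(z)`, with the
convention `E_0 = 1` (so `Δ_12 = Δ`). -/
noncomputable def DeltaK (k : ℕ) (z : ℂ) : ℂ :=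
  Delta z * (if k = 12 then 1 else Eis ((k - 12) / 2) z)

open MeasureTheory Set Filter Metric
open scoped ComplexOrder ArithmeticFunction.sigma

lemma bernoulli_two_mul_neg {k : ℕ} (hk : Even k) (hk0 : k ≠ 0) : bernoulli (2 * k) < 0 := by
  have hzeta := hasSum_zeta_nat hk0
  have hpos : 0 < (-1 : ℝ) ^ (k + 1) * 2 ^ (2 * k - 1) * Real.pi ^ (2 * k) *
      bernoulli (2 * k) / (2 * k).factorial :=
    hzeta.tsum_eq ▸ hzeta.summable.tsum_pos (fun n ↦ by positivity) 1 (by simp)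
  rw [(hk.add_one).neg_one_pow, neg_one_mul, neg_mul, neg_mul, neg_div, neg_pos] at hpos
  have : ((bernoulli (2 * k) : ℚ) : ℝ) < 0 := by
    by_contra! h
    exact hpos.not_ge (by positivity)
  exact_mod_cast this

lemma tprod_one_sub_pow_ne_zero {q : ℂ} (hq : ‖q‖ < 1) : ∏' n : ℕ, (1 - q ^ (n + 1)) ≠ 0 := by
  simp_rw [sub_eq_add_neg]
  refine tprod_one_add_ne_zero_of_summable (fun n h ↦ ?_) ?_
  · have : ‖q ^ (n + 1)‖ < 1 := by rw [norm_pow]; exact pow_lt_one₀ (norm_nonneg q) hq (by omega)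
    rw [← sub_eq_add_neg, sub_eq_zero] at h
    simp [← h] at this
  · simpa using (summable_nat_add_iff 1).mpr (summable_geometric_of_lt_one (norm_nonneg _) hq)

lemma tprod_one_sub_pow_pow_pos (m : ℕ) {t : ℝ} (ht0 : 0 ≤ t) (ht1 : t < 1) :
    0 < ∏' n : ℕ, (1 - (t : ℂ) ^ (n + 1)) ^ m := by
  have hnorm : ‖(t : ℂ)‖ < 1 := by rwa [Complex.norm_real, Real.norm_of_nonneg ht0]
  refine lt_of_le_of_ne (tprod_nonneg fun n ↦ ?_) ?_
  · have : 0 ≤ 1 - t ^ (n + 1) := sub_nonneg.2 (pow_le_one₀ ht0 ht1.le)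
    exact_mod_cast pow_nonneg this m
  · rw [(ModularForm.multipliable_one_sub_pow hnorm).tprod_pow m]
    exact (pow_ne_zero m (tprod_one_sub_pow_ne_zero hnorm)).symm

lemma continuousOn_tsum_sigma_mul_pow (r : ℕ) :
    ContinuousOn (fun q : ℂ ↦ ∑' n : ℕ, ((σ r (n + 1) : ℕ) : ℂ) * q ^ (n + 1)) (ball 0 1) := by
  intro q hq
  obtain ⟨ρ, hqρ, hρ⟩ := exists_between (mem_ball_zero_iff.mp hq)
  have hρ0 : 0 ≤ ρ := (norm_nonneg q).trans hqρ.le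
  have hsum : Summable fun n : ℕ ↦ ((n + 1 : ℕ) : ℝ) ^ (r + 1) * ρ ^ (n + 1) :=
    (summable_nat_add_iff (f := fun n : ℕ ↦ (n : ℝ) ^ (r + 1) * ρ ^ n) 1).mpr
      (summable_pow_mul_geometric_of_norm_lt_one (r + 1) (by rwa [Real.norm_of_nonneg hρ0]))
  have hcont : ContinuousOn (fun q : ℂ ↦ ∑' n : ℕ, ((σ r (n + 1) : ℕ) : ℂ) * q ^ (n + 1))
      (closedBall 0 ρ) := by
    refine continuousOn_tsum (fun n ↦ by fun_prop) hsum fun n p hp ↦ ?_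
    rw [norm_mul, norm_pow, Complex.norm_natCast]
    have hσ : ((σ r (n + 1) : ℕ) : ℝ) ≤ ((n + 1 : ℕ) : ℝ) ^ (r + 1) :=
      mod_cast ArithmeticFunction.sigma_le_pow_succ r (n + 1)
    have hp' : ‖p‖ ^ (n + 1) ≤ ρ ^ (n + 1) :=
      pow_le_pow_left₀ (norm_nonneg p) (mem_closedBall_zero_iff.mp hp) _
    exact mul_le_mul hσ hp' (by positivity) (by positivity)
  exact (hcont.continuousAt (closedBall_mem_nhds_of_mem (mem_ball_zero_iff.mpr hqρ)))
    |>.continuousWithinAt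

noncomputable def eisQ (k : ℕ) (q : ℂ) : ℂ :=
  1 - (4 * k / ((bernoulli (2 * k) : ℚ) : ℂ)) *
    ∑' n : ℕ, ((σ (2 * k - 1) (n + 1) : ℕ) : ℂ) * q ^ (n + 1)

noncomputable def deltaKQ (k : ℕ) (q : ℂ) : ℂ :=
  (∏' n : ℕ, (1 - q ^ (n + 1)) ^ 24) * if k = 12 then 1 else eisQ ((k - 12) / 2) q

lemma DeltaK_eq_Q_mul_deltaKQ (k : ℕ) (z : ℂ) : DeltaK k z = Q z * deltaKQ k (Q z) := by
  rw [DeltaK, Delta, deltaKQ, mul_assoc]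
  rfl

lemma continuousOn_eisQ (k : ℕ) : ContinuousOn (eisQ k) (ball 0 1) :=
  continuousOn_const.sub (continuousOn_const.mul (continuousOn_tsum_sigma_mul_pow _))

lemma continuousOn_deltaKQ (k : ℕ) : ContinuousOn (deltaKQ k) (ball 0 1) :=
  (ModularForm.differentiableOn_tprod_one_sub_pow_pow 24).continuousOn.mul <| by
    split_ifs
    · exact continuousOn_const
    · exact continuousOn_eisQ _

lemma eisQ_pos {k : ℕ} (hk : Even k) {t : ℝ} (ht : 0 ≤ t) : 0 < eisQ k t := by
  have hc : (4 * k / ((bernoulli (2 * k) : ℚ) : ℂ)) ≤ 0 := by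
    rcases eq_or_ne k 0 with rfl | hk0
    · simp
    have hq : 4 * k / bernoulli (2 * k) ≤ 0 :=
      div_nonpos_of_nonneg_of_nonpos (by positivity) (bernoulli_two_mul_neg hk hk0).le
    have hr : ((4 * k / bernoulli (2 * k) : ℚ) : ℝ) ≤ 0 := mod_cast hq
    simpa using Complex.real_le_real.2 hr
  have hS : 0 ≤ ∑' n : ℕ, ((σ (2 * k - 1) (n + 1) : ℕ) : ℂ) * (t : ℂ) ^ (n + 1) :=
    tsum_nonneg fun n ↦ mul_nonneg (Nat.cast_nonneg _) (pow_nonneg (Complex.zero_le_real.2 ht) _)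
  exact sub_pos.2 ((mul_nonpos_of_nonpos_of_nonneg hc hS).trans_lt one_pos)

lemma deltaKQ_pos {k : ℕ} (hk : Even ((k - 12) / 2)) {t : ℝ} (ht0 : 0 ≤ t) (ht1 : t < 1) :
    0 < deltaKQ k t := by
  refine mul_pos (tprod_one_sub_pow_pow_pos 24 ht0 ht1) ?_
  split_ifs
  · exact one_pos
  · exact eisQ_pos hk ht0

lemma Q_I_mul (y : ℝ) : Q (I * y) = (Real.exp (-(2 * Real.pi * y)) : ℂ) := by
  rw [Q, Complex.ofReal_exp]
  congr 1
  push_cast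
  ring_nf
  rw [I_sq]
  ring

lemma exp_neg_two_pi_mul_lt_one {y : ℝ} (hy : 0 < y) : Real.exp (-(2 * Real.pi * y)) < 1 :=
  Real.exp_lt_one_iff.2 (neg_lt_zero.2 (by positivity))

lemma Q_I_mul_mem_ball {y : ℝ} (hy : 0 < y) : Q (I * y) ∈ ball (0 : ℂ) 1 := by
  rw [Q_I_mul, mem_ball_zero_iff, Complex.norm_real, Real.norm_of_nonneg (Real.exp_pos _).le]
  exact exp_neg_two_pi_mul_lt_one hy

lemma DeltaK_I_mul_pos {k : ℕ} (hk : Even ((k - 12) / 2)) {y : ℝ} (hy : 0 < y) :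
    0 < DeltaK k (I * y) := by
  rw [DeltaK_eq_Q_mul_deltaKQ, Q_I_mul]
  exact mul_pos (Complex.zero_lt_real.2 (Real.exp_pos _))
    (deltaKQ_pos hk (Real.exp_pos _).le (exp_neg_two_pi_mul_lt_one hy))

lemma continuousOn_DeltaK_I_mul (k : ℕ) :
    ContinuousOn (fun y : ℝ ↦ DeltaK k (I * y)) (Ioi 0) := by
  have hQ : Continuous fun y : ℝ ↦ Q (I * y) := by unfold Q; fun_prop
  simp_rw [DeltaK_eq_Q_mul_deltaKQ]
  exact hQ.continuousOn.mul ((continuousOn_deltaKQ k).comp hQ.continuousOn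
    fun y hy ↦ Q_I_mul_mem_ball hy)

lemma DeltaK_I_mul_isBigO (k : ℕ) :
    (fun y : ℝ ↦ DeltaK k (I * y)) =O[atTop] fun y ↦ Real.exp (-(2 * Real.pi) * y) := by
  have hsub : closedBall (0 : ℂ) (Real.exp (-(2 * Real.pi))) ⊆ ball 0 1 :=
    closedBall_subset_ball (by simpa using exp_neg_two_pi_mul_lt_one one_pos)
  obtain ⟨C, hC⟩ := (isCompact_closedBall 0 _).exists_bound_of_continuousOn
    ((continuousOn_deltaKQ k).mono hsub)
  refine Asymptotics.IsBigO.of_bound C ?_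
  filter_upwards [eventually_ge_atTop 1] with y hy
  have hexp : Real.exp (-(2 * Real.pi) * y) ≤ Real.exp (-(2 * Real.pi)) :=
    Real.exp_le_exp.2 (by nlinarith [Real.pi_pos])
  have hnorm : ‖Q (I * y)‖ = Real.exp (-(2 * Real.pi) * y) := by
    rw [Q_I_mul, Complex.norm_real, Real.norm_of_nonneg (Real.exp_pos _).le, neg_mul]
  rw [DeltaK_eq_Q_mul_deltaKQ, norm_mul, hnorm, Real.norm_of_nonneg (Real.exp_pos _).le, mul_comm]
  exact mul_le_mul_of_nonneg_right (hC _ (mem_closedBall_zero_iff.2 (hnorm.trans_le hexp)))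
    (Real.exp_pos _).le

lemma integrableOn_DeltaK_I_mul_mul_rpow (k : ℕ) (a : ℝ) :
    IntegrableOn (fun y : ℝ ↦ DeltaK k (I * y) * ((y ^ a : ℝ) : ℂ)) (Ioi 1) := by
  have hcont : ContinuousOn (fun y : ℝ ↦ DeltaK k (I * y) * ((y ^ a : ℝ) : ℂ)) (Ici 1) :=
    ((continuousOn_DeltaK_I_mul k).mono fun y (hy : 1 ≤ y) ↦ zero_lt_one.trans_le hy).mul
      (Complex.continuous_ofReal.comp_continuousOn
        (continuousOn_id.rpow_const fun y (hy : 1 ≤ y) ↦ Or.inl (by positivity)))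
  have hrpow : (fun y : ℝ ↦ ((y ^ a : ℝ) : ℂ)) =O[atTop] fun y ↦ Real.exp (Real.pi * y) :=
    Complex.isBigO_ofReal_left.2 (isLittleO_rpow_exp_pos_mul_atTop a Real.pi_pos).isBigO
  have hdecay : (fun y : ℝ ↦ DeltaK k (I * y) * ((y ^ a : ℝ) : ℂ)) =O[atTop]
      fun y ↦ Real.exp (-Real.pi * y) := by
    refine ((DeltaK_I_mul_isBigO k).mul hrpow).congr_right fun y ↦ ?_
    rw [← Real.exp_add]
    ring_nf
  exact ((hcont.locallyIntegrableOn measurableSet_Ici).integrableOn_of_isBigO_atTop hdecay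
    ⟨Ioi 0, Ioi_mem_atTop 0, exp_neg_integrableOn_Ioi 0 Real.pi_pos⟩).mono_set Ioi_subset_Ici_self

lemma setIntegral_pos_of_forall_pos {X : Type*} [MeasurableSpace X] {μ : Measure X} {s : Set X}
    {F : X → ℂ} (hs : MeasurableSet s) (hμs : μ s ≠ 0) (hF : IntegrableOn F s μ)
    (hpos : ∀ x ∈ s, 0 < F x) : 0 < ∫ x in s, F x ∂μ := by
  have hre : EqOn F (fun x ↦ ((F x).re : ℂ)) s := fun x hx ↦
    Complex.ext rfl (Complex.pos_iff.1 (hpos x hx)).2.symm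
  rw [setIntegral_congr_fun hs hre, integral_complex_ofReal]
  have hF_re : IntegrableOn (fun x ↦ (F x).re) s μ := hF.re
  refine Complex.zero_lt_real.2 ((setIntegral_pos_iff_support_of_nonneg_ae ?_ hF_re).2 ?_)
  · exact ae_restrict_of_forall_mem hs fun x hx ↦ (Complex.pos_iff.1 (hpos x hx)).1.le
  · rw [inter_eq_right.2 fun x hx ↦ Function.mem_support.2 (Complex.pos_iff.1 (hpos x hx)).1.ne']
    exact pos_iff_ne_zero.2 hμs

lemma neg_one_pow_mul_cpow_add_cpow_eq_two_mul_rpow {k : ℕ} (hk : Even (k / 2)) {y : ℝ}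
    (hy : 0 < y) :
    (-1 : ℂ) ^ (k / 2) * (y : ℂ) ^ (((k : ℂ) - 1) / 2 - 1 / 2) +
        (y : ℂ) ^ (1 / 2 + ((k : ℂ) - 3) / 2) =
      2 * ((y ^ (((k : ℝ) - 2) / 2) : ℝ) : ℂ) := by
  rw [hk.neg_one_pow, one_mul, Complex.ofReal_cpow hy.le,
    show ((k : ℂ) - 1) / 2 - 1 / 2 = ((k : ℂ) - 2) / 2 by ring,
    show 1 / 2 + ((k : ℂ) - 3) / 2 = ((k : ℂ) - 2) / 2 by ring]
  push_cast
  ring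

open MeasureTheory Set in
/-- For `k ∈ {12, 16, 20}`, the central value `Λ_k(1/2)` of
`Λ_k(s) = ∫_1^∞ Δ_k(iy) ((-1)^{k/2} y^{(k-1)/2-s} + y^{s+(k-3)/2}) dy` is a strictly
positive real number; in particular `Λ_k(1/2) ≠ 0`. -/
theorem deltaK_central_value_pos (k : ℕ) (hk : k ∈ ({12, 16, 20} : Set ℕ))
    (Λ : ℂ → ℂ)
    (hΛ : ∀ s : ℂ, Λ s = ∫ y in Ioi (1 : ℝ), DeltaK k (Complex.I * y) *
        ((-1 : ℂ) ^ (k / 2) * (y : ℂ) ^ (((k : ℂ) - 1) / 2 - s) +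
          (y : ℂ) ^ (s + ((k : ℂ) - 3) / 2))) :
    (∃ r : ℝ, 0 < r ∧ Λ (1 / 2) = r) ∧ Λ (1 / 2) ≠ 0 := by
  obtain ⟨hk₁, hk₂⟩ : Even (k / 2) ∧ Even ((k - 12) / 2) := by
    simp only [mem_insert_iff, mem_singleton_iff] at hk
    rcases hk with rfl | rfl | rfl <;> decide
  have hΛ_half : Λ (1 / 2) = ∫ y in Ioi (1 : ℝ),
      2 * (DeltaK k (I * y) * ((y ^ (((k : ℝ) - 2) / 2) : ℝ) : ℂ)) := by
    rw [hΛ]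
    refine setIntegral_congr_fun measurableSet_Ioi fun y hy ↦ ?_
    rw [neg_one_pow_mul_cpow_add_cpow_eq_two_mul_rpow hk₁ (zero_lt_one.trans hy)]
    ring
  have hpos : 0 < Λ (1 / 2) := by
    rw [hΛ_half]
    refine setIntegral_pos_of_forall_pos measurableSet_Ioi (by simp)
      ((integrableOn_DeltaK_I_mul_mul_rpow k _).const_mul 2) fun y (hy : 1 < y) ↦ ?_
    have hy₀ : 0 < y := zero_lt_one.trans hy
    exact mul_pos two_pos (mul_pos (DeltaK_I_mul_pos hk₂ hy₀)
      (Complex.zero_lt_real.2 (Real.rpow_pos_of_pos hy₀ _)))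
  obtain ⟨hre, him⟩ := Complex.pos_iff.1 hpos
  exact ⟨⟨_, hre, Complex.ext rfl him.symm⟩, hpos.ne'⟩
end
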